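/- Let H be a Hilbert space, G a group, ρ : G → U(n) a unitary representation, and for each index o a multiplet φ_{o,1}, …, φ_{o,n} of isometries with φ_{o,i}* φ_{o,j} = δ_{ij} and Σ_i φ_{o,i} φ_{o,i}* = 1. Suppose automorphisms α_g of B(H) satisfy α_g(φ_{o,i}) = Σ_j ρ(g)_{ij} φ_{o,j}. Given g_{o'o} ∈ G with g_{o''o'} g_{o'o} = g_{o''o}, define z_{o'o} := Σ_i φ_{o',i} α_{g_{o'o}}(φ_{o,i})*. Then each z_{o'o} is unitary and z_{o''o'} z_{o'o} = z_{o''o} for all o ⊆ o' ⊆ o''. -/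
import Mathlib


open ContinuousLinearMap

private lemma nt_prod_key
    {H : Type*} [NormedAddCommGroup H] [InnerProductSpace ℂ H] [CompleteSpace H] {n : ℕ}
    (φo φP φQ : Fin n → (H →L[ℂ] H))
    (horth : ∀ i j, adjoint (φo i) * φo j = if i = j then 1 else 0)
    (a b : Fin n → Fin n → ℂ) :
    (∑ i, ∑ j, a i j • (φP i * adjoint (φo j))) *
      (∑ k, ∑ l, b k l • (φo k * adjoint (φQ l)))
    = ∑ i, ∑ l, (∑ j, a i j * b j l) • (φP i * adjoint (φQ l)) := by
  have coll : ∀ (A B : H →L[ℂ] H) (j k : Fin n),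
      (A * adjoint (φo j)) * (φo k * B) = if j = k then A * B else 0 := by
    intro A B j k
    rw [mul_assoc, ← mul_assoc (adjoint (φo j)), horth]
    split <;> simp
  rw [Finset.sum_mul_sum]
  refine Finset.sum_congr rfl fun i _ => ?_
  have step : ∀ k, (∑ j, a i j • (φP i * adjoint (φo j))) * (∑ l, b k l • (φo k * adjoint (φQ l)))
      = ∑ j, ∑ l, if j = k then (a i j * b k l) • (φP i * adjoint (φQ l)) else 0 := by
    intro k
    rw [Finset.sum_mul_sum]
    refine Finset.sum_congr rfl fun j _ => Finset.sum_congr rfl fun l _ => ?_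
    rw [smul_mul_smul_comm, coll, smul_ite, smul_zero]
  simp only [step]
  rw [Finset.sum_comm]
  simp only [Finset.sum_ite_irrel, Finset.sum_const_zero, Finset.sum_ite_eq]
  simp only [Finset.mem_univ, if_true]
  rw [Finset.sum_comm]
  exact Finset.sum_congr rfl fun l _ => (Finset.sum_smul).symm

private lemma nt_coeff_one
    {n : ℕ} (M : Matrix.unitaryGroup (Fin n) ℂ) (j l : Fin n) :
    ∑ i, (M : Matrix (Fin n) (Fin n) ℂ) i j * star ((M : Matrix (Fin n) (Fin n) ℂ) i l)
      = if j = l then 1 else 0 := by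
  have h : star ((star (M : Matrix (Fin n) (Fin n) ℂ) * M) j l)
      = star ((1 : Matrix (Fin n) (Fin n) ℂ) j l) := by
    rw [Matrix.UnitaryGroup.star_mul_self]
  simpa [Matrix.mul_apply, Matrix.star_apply, Matrix.one_apply, mul_comm, apply_ite] using h

private lemma nt_coeff_one'
    {n : ℕ} (M : Matrix.unitaryGroup (Fin n) ℂ) (i k : Fin n) :
    ∑ j, star ((M : Matrix (Fin n) (Fin n) ℂ) i j) * (M : Matrix (Fin n) (Fin n) ℂ) k j
      = if i = k then 1 else 0 := by
  have h : star (((M : Matrix (Fin n) (Fin n) ℂ) * star (M : Matrix (Fin n) (Fin n) ℂ)) i k)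
      = star ((1 : Matrix (Fin n) (Fin n) ℂ) i k) := by
    rw [(Unitary.mem_iff.mp M.2).2]
  simpa [Matrix.mul_apply, Matrix.star_apply, Matrix.one_apply, mul_comm, apply_ite] using h

/-- the non-abelian twisted charge transporter
`z_{o'o} := Σ_i φ_{o',i} α_{g_{o'o}}(φ_{o,i})*` built from Cuntz multiplets transforming
under a unitary representation `ρ : G → U(n)` via `α_g(φ_{o,i}) = Σ_j ρ(g)_{ij} φ_{o,j}`,
with `g` a cocycle, is unitary and satisfies the cocycle identity. -/
theorem nonabelian_twisted_transporter
    {H : Type*} [NormedAddCommGroup H] [InnerProductSpace ℂ H] [CompleteSpace H]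
    {ι : Type*} [PartialOrder ι] {G : Type*} [Group G] {n : ℕ}
    (ρ : G →* Matrix.unitaryGroup (Fin n) ℂ)
    (φ : ι → Fin n → (H →L[ℂ] H))
    (horth : ∀ o i j, adjoint (φ o i) * φ o j = if i = j then 1 else 0)
    (hsum : ∀ o, ∑ i, φ o i * adjoint (φ o i) = 1)
    (α : G → (H →L[ℂ] H) → (H →L[ℂ] H))
    (hact : ∀ (s : G) (o : ι) (i : Fin n),
      α s (φ o i) = ∑ j, ((ρ s : Matrix (Fin n) (Fin n) ℂ) i j) • φ o j)
    (g : ι → ι → G)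
    (hg : ∀ o o' o'' : ι, o ≤ o' → o' ≤ o'' → g o'' o' * g o' o = g o'' o)
    (z : ι → ι → (H →L[ℂ] H))
    (hz : ∀ o o' : ι, o ≤ o' →
      z o' o = ∑ i, φ o' i * adjoint (α (g o' o) (φ o i))) :
    (∀ o o' : ι, o ≤ o' → z o' o ∈ unitary (H →L[ℂ] H)) ∧
    (∀ o o' o'' : ι, o ≤ o' → o' ≤ o'' → z o'' o' * z o' o = z o'' o) := by
  have hzrep : ∀ o o' : ι, o ≤ o' → z o' o =
      ∑ i, ∑ j, star ((ρ (g o' o) : Matrix (Fin n) (Fin n) ℂ) i j) •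
        (φ o' i * adjoint (φ o j)) := by
    intro o o' h
    rw [hz o o' h]
    refine Finset.sum_congr rfl fun i _ => ?_
    simp only [hact, ← star_eq_adjoint, star_sum, star_smul, Finset.mul_sum, mul_smul_comm]
  have hzadj : ∀ o o' : ι, o ≤ o' → adjoint (z o' o) =
      ∑ k, ∑ l, ((ρ (g o' o) : Matrix (Fin n) (Fin n) ℂ) l k) •
        (φ o k * adjoint (φ o' l)) := by
    intro o o' h
    rw [hzrep o o' h]
    simp only [← star_eq_adjoint, star_sum, star_smul, star_star, star_mul]
    rw [Finset.sum_comm]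
  constructor
  · intro o o' h
    rw [Unitary.mem_iff]
    constructor
    · rw [star_eq_adjoint, hzadj o o' h, hzrep o o' h,
        nt_prod_key (φ o') (φ o) (φ o) (horth o')
          (fun k l => (ρ (g o' o) : Matrix (Fin n) (Fin n) ℂ) l k)
          (fun i j => star ((ρ (g o' o) : Matrix (Fin n) (Fin n) ℂ) i j))]
      simp only [nt_coeff_one (ρ (g o' o)), ite_smul, one_smul, zero_smul,
        Finset.sum_ite_eq, Finset.mem_univ, if_true]
      exact hsum o
    · rw [star_eq_adjoint, hzadj o o' h, hzrep o o' h,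
        nt_prod_key (φ o) (φ o') (φ o') (horth o)
          (fun i j => star ((ρ (g o' o) : Matrix (Fin n) (Fin n) ℂ) i j))
          (fun k l => (ρ (g o' o) : Matrix (Fin n) (Fin n) ℂ) l k)]
      simp only [nt_coeff_one' (ρ (g o' o)), ite_smul, one_smul, zero_smul,
        Finset.sum_ite_eq, Finset.mem_univ, if_true]
      exact hsum o'
  · intro o o' o'' h h'
    rw [hzrep o o' h, hzrep o' o'' h', hzrep o o'' (le_trans h h'),
      nt_prod_key (φ o') (φ o'') (φ o) (horth o')
        (fun i j => star ((ρ (g o'' o') : Matrix (Fin n) (Fin n) ℂ) i j))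
        (fun j l => star ((ρ (g o' o) : Matrix (Fin n) (Fin n) ℂ) j l))]
    refine Finset.sum_congr rfl fun i _ => Finset.sum_congr rfl fun l _ => ?_
    congr 1
    rw [← hg o o' o'' h h', map_mul]
    have : ((ρ (g o'' o') * ρ (g o' o) : Matrix.unitaryGroup (Fin n) ℂ) :
        Matrix (Fin n) (Fin n) ℂ) = (ρ (g o'' o') : Matrix (Fin n) (Fin n) ℂ) *
        (ρ (g o' o) : Matrix (Fin n) (Fin n) ℂ) := rfl
    rw [this, Matrix.mul_apply, star_sum]
    exact Finset.sum_congr rfl fun j _ => by rw [star_mul, mul_comm]
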